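/- arXiv:1806.10218 — 4 statements merged into one kernel-verified Lean document; each statement's English description precedes it below -/
import Mathlib

section
/- Let A be a finite alphabet and F an equicontinuous cellular automaton on A^ℤ. Then F is eventually periodic as a map: there exist an integer p₀ ≥ 0 (the preperiod) and an integer p ≥ 1 (the period) such that F^{p₀+p} = F^{p₀}. -/
open MeasureTheory Function Set
open scoped Classical ENNReal

/-- The configuration space of a one-dimensional cellular automaton over the alphabet `A`. -/
abbrev Config (A : Type*) := ℤ → A

/-- The shift map `σ`, defined by `σ(x)_i = x_{i+1}`. -/
def shift {A : Type*} (x : Config A) : Config A := fun i => x (i + 1)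

/-- The standard metric `d(x,y) = 2^{-n}` where
`n = min { i ≥ 0 : x_i ≠ y_i or x_{-i} ≠ y_{-i} }`, inducing the product topology. -/
noncomputable def cdist {A : Type*} (x y : Config A) : ℝ :=
  if x = y then 0
  else (2 : ℝ) ^ (-((sInf {n : ℕ | x (n : ℤ) ≠ y (n : ℤ) ∨ x (-(n : ℤ)) ≠ y (-(n : ℤ))} : ℕ) : ℤ))

/-- `F` has radius `r`: there is a local rule `f : A^{2r+1} → A` with
`F(x)_i = f(x_{i-r}, ..., x_{i+r})`. -/
def HasRadius {A : Type*} (F : Config A → Config A) (r : ℕ) : Prop :=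
  ∃ f : (Fin (2 * r + 1) → A) → A, ∀ (x : Config A) (i : ℤ),
    F x i = f (fun j => x (i - (r : ℤ) + (j : ℤ)))

/-- A map on `A^ℤ` is equicontinuous if the family of its iterates is uniformly
equicontinuous. -/
def EquicontMap {A : Type*} (F : Config A → Config A) : Prop :=
  ∀ ε > (0 : ℝ), ∃ δ > (0 : ℝ), ∀ x y : Config A, cdist x y < δ →
    ∀ n : ℕ, cdist (F^[n] x) (F^[n] y) < ε

/-- `x` is an equicontinuous point of `F`. -/
def IsEquicontPt {A : Type*} (F : Config A → Config A) (x : Config A) : Prop :=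
  ∀ ε > (0 : ℝ), ∃ δ > (0 : ℝ), ∀ y : Config A, cdist x y < δ →
    ∀ n : ℕ, cdist (F^[n] x) (F^[n] y) < ε

/-- `F` is sensitive to initial conditions. -/
def Sensitive {A : Type*} (F : Config A → Config A) : Prop :=
  ∃ ε > (0 : ℝ), ∀ x : Config A, ∀ δ > (0 : ℝ), ∃ y : Config A,
    cdist x y < δ ∧ ∃ n : ℕ, ε ≤ cdist (F^[n] x) (F^[n] y)

/-- `w : A^L` is an `s`-blocking word for `F`. -/
def IsBlockingWord {A : Type*} (F : Config A → Config A) (s L : ℕ) (w : Fin L → A) : Prop :=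
  s ≤ L ∧ ∃ p : ℕ, p + s ≤ L ∧ ∀ x y : Config A,
    (∀ j : Fin L, x (j : ℤ) = w j) → (∀ j : Fin L, y (j : ℤ) = w j) →
    ∀ n : ℕ, ∀ k : ℤ, (p : ℤ) ≤ k → k ≤ (p : ℤ) + (s : ℤ) →
      F^[n] x k = F^[n] y k

/-- The cylinder `[x(-n,n)]` of configurations agreeing with `x` on coordinates `-n, ..., n`. -/
def cyl {A : Type*} (x : Config A) (n : ℕ) : Set (Config A) :=
  {y | ∀ j : ℤ, -(n : ℤ) ≤ j → j ≤ (n : ℤ) → y j = x j}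

/-- The set `B_{[i₁,i₂]}(x) = {y : ∀ j ≥ 0, F^j(y)(i₁,i₂) = F^j(x)(i₁,i₂)}`. -/
def Bset {A : Type*} (F : Config A → Config A) (i₁ i₂ : ℤ) (x : Config A) : Set (Config A) :=
  {y | ∀ k : ℕ, ∀ j : ℤ, i₁ ≤ j → j ≤ i₂ → F^[k] y j = F^[k] x j}

/-- `ν` is the uniform Bernoulli measure: every cylinder determined by coordinates in a
finite set `s` has measure `(1/|A|)^{|s|}`. -/
def IsUniformBernoulli {A : Type*} [Fintype A] [MeasurableSpace A]
    (ν : Measure (Config A)) : Prop :=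
  ∀ (s : Finset ℤ) (u : ℤ → A),
    ν {x : Config A | ∀ i ∈ s, x i = u i} = ((Fintype.card A : ℝ≥0∞))⁻¹ ^ s.card

/-- `x` is a `ν`-equicontinuous point of `F` (Gilman). -/
def NuEquicontPt {A : Type*} [MeasurableSpace A] (F : Config A → Config A)
    (ν : Measure (Config A)) (x : Config A) : Prop :=
  ∀ m : ℕ, 0 < m → Filter.Tendsto
    (fun n : ℕ => ν (cyl x n ∩ Bset F (-(m : ℤ)) (m : ℤ) x) / ν (cyl x n))
    Filter.atTop (nhds 1)

section Aux

variable {A : Type*}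

/-- Shift by an arbitrary integer. -/
def shiftZ (k : ℤ) (x : Config A) : Config A := fun j => x (j + k)

lemma shiftZ_zero (x : Config A) : shiftZ 0 x = x := by
  funext j; simp [shiftZ]

lemma shiftZ_shiftZ (k l : ℤ) (x : Config A) :
    shiftZ k (shiftZ l x) = shiftZ (k + l) x := by
  funext j; simp [shiftZ, add_assoc]

lemma nonemptyS {x y : Config A} (hxy : x ≠ y) :
    {n : ℕ | x (n : ℤ) ≠ y (n : ℤ) ∨ x (-(n : ℤ)) ≠ y (-(n : ℤ))}.Nonempty := by
  obtain ⟨i, hi⟩ := Function.ne_iff.mp hxy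
  refine ⟨i.natAbs, ?_⟩
  rcases Int.natAbs_eq i with he | he
  · left; rwa [← he]
  · right; rwa [← he]

lemma eq_at_zero_of_cdist_lt_one {x y : Config A} (h : cdist x y < 1) : x 0 = y 0 := by
  by_cases hxy : x = y
  · rw [hxy]
  · rw [cdist, if_neg hxy] at h
    set S := {n : ℕ | x (n : ℤ) ≠ y (n : ℤ) ∨ x (-(n : ℤ)) ≠ y (-(n : ℤ))} with hS
    have hpos : 0 < sInf S := by
      rcases Nat.eq_zero_or_pos (sInf S) with h0 | h0
      · rw [h0] at h; norm_num at h
      · exact h0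
    have h0 : (0 : ℕ) ∉ S := Nat.notMem_of_lt_sInf hpos
    simp only [hS, Set.mem_setOf_eq, Nat.cast_zero, neg_zero, not_or, not_not] at h0
    exact h0.1

lemma cdist_lt_of_agree {x y : Config A} {m : ℕ}
    (h : ∀ j : ℤ, |j| ≤ (m : ℤ) → x j = y j) : cdist x y < (1/2 : ℝ) ^ m := by
  by_cases hxy : x = y
  · rw [cdist, if_pos hxy]; positivity
  · rw [cdist, if_neg hxy]
    set S := {n : ℕ | x (n : ℤ) ≠ y (n : ℤ) ∨ x (-(n : ℤ)) ≠ y (-(n : ℤ))} with hS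
    have hmem : sInf S ∈ S := Nat.sInf_mem (nonemptyS hxy)
    have hgt : m < sInf S := by
      by_contra hle
      push_neg at hle
      have hb : |((sInf S : ℕ) : ℤ)| ≤ (m : ℤ) := by
        rw [abs_of_nonneg (Int.natCast_nonneg _)]
        exact_mod_cast hle
      rcases hmem with hc | hc
      · exact hc (h _ hb)
      · exact hc (h _ (by rwa [abs_neg]))
    have h1 : (2 : ℝ) ^ (-((sInf S : ℕ) : ℤ)) < (2 : ℝ) ^ (-(m : ℤ)) :=
      zpow_lt_zpow_right₀ one_lt_two (by omega)
    calc (2 : ℝ) ^ (-((sInf S : ℕ) : ℤ)) < (2 : ℝ) ^ (-(m : ℤ)) := h1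
      _ = (1/2 : ℝ) ^ m := by
          rw [one_div, inv_pow, ← zpow_natCast, ← zpow_neg]

lemma F_shiftZ {F : Config A → Config A} (hFshift : F ∘ shift = shift ∘ F)
    (k : ℤ) (x : Config A) : F (shiftZ k x) = shiftZ k (F x) := by
  have hpt : ∀ z : Config A, F (shift z) = shift (F z) := fun z => congrFun hFshift z
  have hnat : ∀ (n : ℕ) (x : Config A), F (shiftZ (n : ℤ) x) = shiftZ (n : ℤ) (F x) := by
    intro n
    induction n with
    | zero => intro x; simp [shiftZ_zero]
    | succ n ih =>
      intro x
      have h1 : shiftZ ((n + 1 : ℕ) : ℤ) x = shift (shiftZ (n : ℤ) x) := by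
        funext j; simp only [shiftZ, shift]; congr 1; push_cast; ring
      have h2 : shiftZ ((n + 1 : ℕ) : ℤ) (F x) = shift (shiftZ (n : ℤ) (F x)) := by
        funext j; simp only [shiftZ, shift]; congr 1; push_cast; ring
      rw [h1, hpt, ih, h2]
  rcases le_or_gt 0 k with hk | hk
  · have : ((k.toNat : ℕ) : ℤ) = k := Int.toNat_of_nonneg hk
    rw [← this]; exact hnat _ _
  · set n : ℕ := (-k).toNat with hn
    have hnk : (n : ℤ) = -k := Int.toNat_of_nonneg (by omega)
    have hx : shiftZ (n : ℤ) (shiftZ k x) = x := by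
      rw [shiftZ_shiftZ, show (n : ℤ) + k = 0 by omega, shiftZ_zero]
    have : F x = shiftZ (n : ℤ) (F (shiftZ k x)) := by
      have h3 := hnat n (shiftZ k x)
      rw [hx] at h3
      exact h3
    calc F (shiftZ k x)
        = shiftZ (k + n) (F (shiftZ k x)) := by
          rw [show k + (n : ℤ) = 0 by omega, shiftZ_zero]
      _ = shiftZ k (shiftZ (n : ℤ) (F (shiftZ k x))) := (shiftZ_shiftZ _ _ _).symm
      _ = shiftZ k (F x) := congrArg (shiftZ k) this.symm

lemma iterF_shiftZ {F : Config A → Config A} (hFshift : F ∘ shift = shift ∘ F)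
    (n : ℕ) (k : ℤ) (x : Config A) : F^[n] (shiftZ k x) = shiftZ k (F^[n] x) := by
  induction n with
  | zero => simp
  | succ n ih =>
    rw [Function.iterate_succ_apply', Function.iterate_succ_apply', ih,
      F_shiftZ hFshift]

end Aux

/-- An equicontinuous cellular automaton on `A^ℤ` (`A` finite) is eventually
periodic as a map: there are a preperiod `p₀ ≥ 0` and a period `p ≥ 1` with
`F^{p₀+p} = F^{p₀}`. -/
theorem equicontinuous_CA_eventually_periodic
    {A : Type*} [Fintype A] [TopologicalSpace A] [DiscreteTopology A]
    (F : Config A → Config A) (hFcont : Continuous F)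
    (hFshift : F ∘ shift = shift ∘ F) (hFeq : EquicontMap F) :
    ∃ (p₀ p : ℕ), 1 ≤ p ∧ F^[p₀ + p] = F^[p₀] := by
  rcases isEmpty_or_nonempty A with hA | hA
  · refine ⟨0, 1, le_refl 1, ?_⟩
    funext x
    exact (hA.false (x 0)).elim
  · obtain ⟨δ, hδpos, hδ⟩ := hFeq 1 one_pos
    obtain ⟨m, hm⟩ := exists_pow_lt_of_lt_one hδpos (by norm_num : (1/2 : ℝ) < 1)
    -- each `F^[n]` is determined on coordinate `i` by the window `[i - m, i + m]`
    have key : ∀ (x y : Config A) (i : ℤ), (∀ j : ℤ, |j - i| ≤ (m : ℤ) → x j = y j) →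
        ∀ n : ℕ, F^[n] x i = F^[n] y i := by
      intro x y i hagree n
      have hxy' : cdist (shiftZ i x) (shiftZ i y) < δ := by
        refine lt_trans (cdist_lt_of_agree ?_) hm
        intro j hj
        show x (j + i) = y (j + i)
        apply hagree
        simpa using hj
      have h0 := eq_at_zero_of_cdist_lt_one (hδ _ _ hxy' n)
      rw [iterF_shiftZ hFshift, iterF_shiftZ hFshift] at h0
      simpa [shiftZ] using h0
    inhabit A
    -- extend a finite word to a configuration
    set ext : (Fin (2 * m + 1) → A) → Config A :=
      fun u j => if h : 0 ≤ j ∧ j ≤ 2 * m then u ⟨j.toNat, by omega⟩ else default with hext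
    set g : ℕ → ((Fin (2 * m + 1) → A) → A) :=
      fun n u => F^[n] (ext u) (m : ℤ) with hg
    have hrep : ∀ (n : ℕ) (x : Config A) (i : ℤ),
        F^[n] x i = g n (fun j : Fin (2 * m + 1) => x (i - (m : ℤ) + (j : ℤ))) := by
      intro n x i
      have h1 : F^[n] x i = F^[n] (shiftZ (i - (m : ℤ)) x) (m : ℤ) := by
        rw [iterF_shiftZ hFshift]
        show F^[n] x i = F^[n] x ((m : ℤ) + (i - (m : ℤ)))
        congr 1; ring
      rw [h1]
      refine key _ _ (m : ℤ) (fun j hj => ?_) n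
      have hj0 : 0 ≤ j ∧ j ≤ 2 * (m : ℤ) := by
        constructor <;> [skip; skip] <;>
          · have := abs_le.mp hj; omega
      simp only [shiftZ, hext]
      rw [dif_pos hj0]
      congr 1
      have : ((j.toNat : ℕ) : ℤ) = j := Int.toNat_of_nonneg hj0.1
      omega
    have hFeqiter : ∀ a b : ℕ, g a = g b → F^[a] = F^[b] := by
      intro a b hgab
      funext x
      funext i
      rw [hrep a x i, hrep b x i, hgab]
    obtain ⟨a, b, hab, hgab⟩ := Finite.exists_ne_map_eq_of_infinite g
    rcases hab.lt_or_gt with h | h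
    · refine ⟨a, b - a, by omega, ?_⟩
      rw [show a + (b - a) = b from by omega]
      exact hFeqiter b a hgab.symm
    · refine ⟨b, a - b, by omega, ?_⟩
      rw [show b + (a - b) = a from by omega]
      exact hFeqiter a b hgab
end

section
/- Let F be a cellular automaton on A^ℤ of radius r, and let p ≥ 2r+1 be an integer. If y ∈ A^ℤ satisfies F^k(y)(-r,r) = F^k(y)(p-r, p+r) for all k ≥ 0, then the sequence k ↦ F^k(y)(-r,r) ∈ A^{2r+1} is eventually periodic: there exist k₀ ≥ 0 and q ≥ 1 with F^{k+q}(y)(-r,r) = F^k(y)(-r,r) for all k ≥ k₀. -/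
open MeasureTheory Function Set
open scoped Classical ENNReal

/-- If `F` is a cellular automaton of radius `r`, `p ≥ 2r+1`, and
`y` satisfies `F^k(y)(-r,r) = F^k(y)(p-r,p+r)` for all `k ≥ 0`, then the central word
sequence `k ↦ F^k(y)(-r,r)` is eventually periodic. -/
theorem repeated_window_eventually_periodic
    {A : Type*} [Fintype A] [TopologicalSpace A] [DiscreteTopology A]
    (F : Config A → Config A) (hFcont : Continuous F)
    (hFshift : F ∘ shift = shift ∘ F)
    (r : ℕ) (hr : HasRadius F r) (p : ℕ) (hp : 2 * r + 1 ≤ p) (y : Config A)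
    (hy : ∀ k : ℕ, ∀ j : ℤ, -(r : ℤ) ≤ j → j ≤ (r : ℤ) →
      F^[k] y j = F^[k] y (j + (p : ℤ))) :
    ∃ (k₀ q : ℕ), 1 ≤ q ∧ ∀ k : ℕ, k₀ ≤ k →
      ∀ j : ℤ, -(r : ℤ) ≤ j → j ≤ (r : ℤ) → F^[k + q] y j = F^[k] y j := by
  obtain ⟨f, hf⟩ := hr
  set seq : ℕ → (Fin (p + 1) → A) := fun k i => F^[k] y (i : ℤ) with hseq
  have agree : ∀ k k', seq k = seq k' →
      ∀ j : ℤ, -(r : ℤ) ≤ j → j ≤ (p : ℤ) + r → F^[k] y j = F^[k'] y j := by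
    intro k k' h j hj1 hj2
    have base : ∀ j : ℤ, 0 ≤ j → j ≤ (p : ℤ) → F^[k] y j = F^[k'] y j := by
      intro j h0 h1
      have hlt : j.toNat < p + 1 := by omega
      have := congrFun h ⟨j.toNat, hlt⟩
      simpa [hseq, Int.toNat_of_nonneg h0] using this
    rcases lt_or_ge j 0 with hneg | hpos
    · have h1 := hy k j hj1 (by omega)
      have h2 := hy k' j hj1 (by omega)
      rw [h1, h2]; exact base _ (by omega) (by omega)
    · rcases le_or_gt j (p : ℤ) with hle | hgt
      · exact base j hpos hle
      · have h1 := hy k (j - p) (by omega) (by omega)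
        have h2 := hy k' (j - p) (by omega) (by omega)
        have e : j - (p : ℤ) + p = j := by ring
        rw [e] at h1 h2
        rw [← h1, ← h2]; exact base _ (by omega) (by omega)
  have step : ∀ k k', seq k = seq k' → seq (k + 1) = seq (k' + 1) := by
    intro k k' h
    funext i
    simp only [hseq]
    rw [Function.iterate_succ_apply', Function.iterate_succ_apply', hf, hf]
    congr 1
    funext j
    have hi : (i : ℕ) ≤ p := Nat.lt_succ_iff.mp i.isLt
    have hj : (j : ℕ) ≤ 2 * r := Nat.lt_succ_iff.mp j.isLt
    exact agree k k' h _ (by omega) (by omega)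
  have hshift : ∀ k k', seq k = seq k' → ∀ n, seq (k + n) = seq (k' + n) := by
    intro k k' h n
    induction n with
    | zero => simpa
    | succ n ih =>
      have := step _ _ ih
      exact this
  obtain ⟨a, b, hne, heq⟩ := Finite.exists_ne_map_eq_of_infinite seq
  rcases hne.lt_or_gt with hab | hab
  · refine ⟨a, b - a, by omega, ?_⟩
    intro k hk j hj1 hj2
    have hk' : k = a + (k - a) := by omega
    have hper : seq (k + (b - a)) = seq k := by
      have := hshift a b heq (k - a)
      rw [← hk'] at this
      have e : b + (k - a) = k + (b - a) := by omega
      rw [e] at this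
      exact this.symm
    exact agree _ _ hper j hj1 (by omega)
  · refine ⟨b, a - b, by omega, ?_⟩
    intro k hk j hj1 hj2
    have hk' : k = b + (k - b) := by omega
    have hper : seq (k + (a - b)) = seq k := by
      have := hshift b a heq.symm (k - b)
      rw [← hk'] at this
      have e : a + (k - b) = k + (a - b) := by omega
      rw [e] at this
      exact this.symm
    exact agree _ _ hper j hj1 (by omega)
end

section
/- Let F be a cellular automaton on A^ℤ and ν the uniform Bernoulli measure on A^ℤ. Then ν is F-invariant (ν(F^{-1}(E)) = ν(E) for every Borel set E) if and only if F is surjective. -/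
open MeasureTheory Function Set
open scoped Classical ENNReal

section Aux

variable {A : Type*} [Fintype A] [Nonempty A]

/-! ### Shift commutation for all integer shifts -/

lemma shift_comm_all (F : Config A → Config A) (hFshift : F ∘ shift = shift ∘ F) :
    ∀ (k : ℤ) (x : Config A), F (fun j => x (j + k)) = fun j => F x (j + k) := by
  have h1 : ∀ x : Config A, F (shift x) = shift (F x) := fun x => congrFun hFshift x
  have hnat : ∀ (m : ℕ) (x : Config A),
      F (fun j => x (j + (m : ℤ))) = fun j => F x (j + (m : ℤ)) := by
    intro m
    induction m with
    | zero =>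
      intro x
      have hx : (fun j : ℤ => x (j + ((0:ℕ) : ℤ))) = x := by funext j; norm_num
      rw [hx]; funext j; norm_num
    | succ k ih =>
      intro x
      have h2 : (fun j : ℤ => x (j + ((k+1 : ℕ) : ℤ))) = shift (fun j => x (j + (k : ℤ))) := by
        funext j; simp only [shift]; congr 1; push_cast; ring
      rw [h2, h1, ih]
      funext j
      simp only [shift]
      congr 1; push_cast; ring
  intro k x
  rcases Int.eq_nat_or_neg k with ⟨m, rfl | rfl⟩
  · exact hnat m x
  · set y : Config A := fun j => x (j + -(m:ℤ)) with hy
    have hxy : (fun j : ℤ => y (j + (m:ℤ))) = x := by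
      funext j; simp only [hy]; congr 1; ring
    have h3 := hnat m y
    rw [hxy] at h3
    funext j
    have := congrFun h3 (j + -(m:ℤ))
    rw [this]
    congr 1; ring

/-! ### Curtis–Hedlund–Lyndon: existence of a radius -/

lemma exists_radius [TopologicalSpace A] [DiscreteTopology A]
    (F : Config A → Config A) (hFcont : Continuous F) :
    ∃ r : ℕ, ∀ x y : Config A, (∀ j : ℤ, -(r:ℤ) ≤ j → j ≤ (r:ℤ) → x j = y j) →
      F x 0 = F y 0 := by
  have hg : Continuous fun x : Config A => F x 0 := (continuous_apply (0:ℤ)).comp hFcont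
  have H : ∀ x : Config A, ∃ I : Finset ℤ,
      {y : Config A | ∀ i ∈ I, y i = x i} ⊆ {y : Config A | F y 0 = F x 0} := by
    intro x
    have hopen : IsOpen {y : Config A | F y 0 = F x 0} := by
      have he : {y : Config A | F y 0 = F x 0} = (fun y : Config A => F y 0) ⁻¹' {F x 0} := rfl
      rw [he]
      exact hg.isOpen_preimage _ (isOpen_discrete _)
    rcases isOpen_pi_iff.mp hopen x rfl with ⟨I, u, hIu, hsub⟩
    refine ⟨I, fun y hy => hsub ?_⟩
    intro i hi
    rw [Set.mem_setOf_eq] at hy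
    rw [hy i hi]
    exact (hIu i hi).2
  choose I hI using H
  have hcov : (Set.univ : Set (Config A)) ⊆ ⋃ x, (↑(I x) : Set ℤ).pi (fun i => {x i}) := by
    intro x _
    exact Set.mem_iUnion.mpr ⟨x, fun i _ => rfl⟩
  obtain ⟨t, ht⟩ := isCompact_univ.elim_finite_subcover
    (fun x : Config A => (↑(I x) : Set ℤ).pi (fun i => {x i}))
    (fun x => isOpen_set_pi (I x).finite_toSet (fun i _ => isOpen_discrete _)) hcov
  refine ⟨t.sup (fun x => (I x).sup Int.natAbs), fun x y hxy => ?_⟩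
  obtain ⟨z, hz, hxz⟩ := Set.mem_iUnion₂.mp (ht (Set.mem_univ x))
  have hyz : y ∈ (↑(I z) : Set ℤ).pi (fun i => {z i}) := by
    intro i hi
    have h1 : i.natAbs ≤ (I z).sup Int.natAbs := Finset.le_sup hi
    have h2 : (I z).sup Int.natAbs ≤ t.sup (fun x => (I x).sup Int.natAbs) :=
      Finset.le_sup (f := fun x => (I x).sup Int.natAbs) hz
    have hb : i.natAbs ≤ t.sup (fun x => (I x).sup Int.natAbs) := le_trans h1 h2
    have := hxy i (by omega) (by omega)
    rw [← this]
    exact hxz i hi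
  have hx' : F x 0 = F z 0 := hI z (fun i hi => hxz i hi)
  have hy' : F y 0 = F z 0 := hI z (fun i hi => hyz i hi)
  rw [hx', hy']

end Aux

set_option linter.unusedSectionVars false

section Atoms

variable {A : Type*} [Fintype A] [Nonempty A] [MeasurableSpace A]

/-- the measurable atom containing `a` -/
noncomputable def mblock (a : A) : Set A := ⋂₀ {S : Set A | MeasurableSet S ∧ a ∈ S}

lemma measurableSet_mblock (a : A) : MeasurableSet (mblock a) := by
  refine MeasurableSet.sInter ?_ (fun S hS => hS.1)
  exact Set.to_countable _

lemma mem_mblock_self (a : A) : a ∈ mblock a := fun S hS => hS.2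

lemma mblock_subset {a : A} {S : Set A} (hS : MeasurableSet S) (ha : a ∈ S) :
    mblock a ⊆ S := fun _ hx => hx S ⟨hS, ha⟩

lemma mem_mblock_iff {a b : A} : b ∈ mblock a ↔ ∀ S : Set A, MeasurableSet S → a ∈ S → b ∈ S := by
  constructor
  · intro h S hS ha; exact h S ⟨hS, ha⟩
  · intro h S hS; exact h S hS.1 hS.2

lemma mem_mblock_symm {a b : A} (h : b ∈ mblock a) : a ∈ mblock b := by
  rw [mem_mblock_iff] at h ⊢
  intro S hS hb
  by_contra ha
  exact (h Sᶜ hS.compl ha) hb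

lemma mblock_eq_of_mem {a b : A} (h : b ∈ mblock a) : mblock b = mblock a := by
  have h' := mem_mblock_symm h
  rw [mem_mblock_iff] at h h'
  ext c
  rw [mem_mblock_iff, mem_mblock_iff]
  constructor
  · intro hc S hS ha; exact hc S hS (h S hS ha)
  · intro hc S hS hb; exact hc S hS (h' S hS hb)

/-- the σ-algebra of sets invariant under changing coordinates within atoms -/
def invSA : MeasurableSpace (Config A) where
  MeasurableSet' E := ∀ x ∈ E, ∀ y : Config A, (∀ i, y i ∈ mblock (x i)) → y ∈ E
  measurableSet_empty := by intro x hx; exact absurd hx (Set.notMem_empty x)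
  measurableSet_compl := by
    intro E hE x hx y hxy
    intro hyE
    exact hx (hE y hyE x (fun i => mem_mblock_symm ((mblock_eq_of_mem (hxy i)) ▸
      mem_mblock_self (y i))))
  measurableSet_iUnion := by
    intro f hf x hx y hxy
    obtain ⟨i, hi⟩ := Set.mem_iUnion.mp hx
    exact Set.mem_iUnion.mpr ⟨i, hf i x hi y hxy⟩

lemma pi_le_trick {m' : MeasurableSpace (Config A)}
    (h : ∀ (i : ℤ) (S : Set A), MeasurableSet S →
      MeasurableSet[m'] ((fun x : Config A => x i) ⁻¹' S)) :
    ∀ E : Set (Config A), MeasurableSet[MeasurableSpace.pi] E → MeasurableSet[m'] E := by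
  have hm : @Measurable (Config A) (Config A) m' MeasurableSpace.pi (fun x => x) := by
    rw [measurable_pi_iff]
    intro i S hS
    exact h i S hS
  intro E hE
  exact hm hE

lemma meas_invariant {E : Set (Config A)} (hE : MeasurableSet E) :
    ∀ x ∈ E, ∀ y : Config A, (∀ i, y i ∈ mblock (x i)) → y ∈ E := by
  have h2 : MeasurableSet[invSA (A := A)] E := by
    refine pi_le_trick ?_ E hE
    intro i S hS x hx y hxy
    rw [Set.mem_preimage] at hx ⊢
    exact mblock_subset hS hx (hxy i)
  exact h2

/-- measure of a saturated cylinder -/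
lemma nu_sat (ν : Measure (Config A)) (hν : IsUniformBernoulli ν) (s : Finset ℤ) (u : ℤ → A) :
    ν {x : Config A | ∀ i ∈ s, x i ∈ mblock (u i)} = ((Fintype.card A : ℝ≥0∞))⁻¹ ^ s.card := by
  have hsub : {x : Config A | ∀ i ∈ s, x i = u i} ⊆ {x | ∀ i ∈ s, x i ∈ mblock (u i)} := by
    intro x hx i hi
    rw [hx i hi]
    exact mem_mblock_self _
  have h2 : {x : Config A | ∀ i ∈ s, x i ∈ mblock (u i)} ⊆
      toMeasurable ν {x : Config A | ∀ i ∈ s, x i = u i} := by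
    intro x hx
    have hinv := meas_invariant (measurableSet_toMeasurable ν {x : Config A | ∀ i ∈ s, x i = u i})
    set y : Config A := fun i => if i ∈ s then u i else x i with hy
    have hyC : y ∈ {x : Config A | ∀ i ∈ s, x i = u i} := by
      intro i hi; simp [hy, hi]
    refine hinv y (subset_toMeasurable ν _ hyC) x fun i => ?_
    by_cases hi : i ∈ s
    · simpa [hy, hi] using hx i hi
    · simp only [hy, hi, if_false]
      exact mem_mblock_self _
  refine le_antisymm ?_ ?_
  · calc ν {x : Config A | ∀ i ∈ s, x i ∈ mblock (u i)}
        ≤ ν (toMeasurable ν {x : Config A | ∀ i ∈ s, x i = u i}) := measure_mono h2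
      _ = ν {x : Config A | ∀ i ∈ s, x i = u i} := measure_toMeasurable _
      _ = _ := hν s u
  · rw [← hν s u]
    exact measure_mono hsub

lemma mblock_eq_singleton (ν : Measure (Config A)) (hν : IsUniformBernoulli ν) (a : A) :
    mblock a = {a} := by
  set c := Fintype.card A with hc
  have hc0 : (c : ℝ≥0∞) ≠ 0 := by
    simp only [ne_eq, Nat.cast_eq_zero, hc]
    exact Fintype.card_ne_zero
  have hct : (c : ℝ≥0∞) ≠ ⊤ := ENNReal.natCast_ne_top c
  set T : Finset (Set A) := Finset.univ.image (fun b : A => mblock b) with hT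
  -- cover
  have hcover : {x : Config A | x 0 ∈ mblock a}
      = ⋃ β ∈ T, {x : Config A | x 0 ∈ mblock a ∧ x 1 ∈ β} := by
    ext x
    simp only [Set.mem_setOf_eq, Set.mem_iUnion]
    constructor
    · intro hx
      exact ⟨mblock (x 1), Finset.mem_image.mpr ⟨x 1, Finset.mem_univ _, rfl⟩,
        hx, mem_mblock_self _⟩
    · rintro ⟨β, _, hx, _⟩; exact hx
  have hdisj : (↑T : Set (Set A)).PairwiseDisjoint
      (fun β => {x : Config A | x 0 ∈ mblock a ∧ x 1 ∈ β}) := by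
    intro β hβ β' hβ' hne
    refine Set.disjoint_left.mpr ?_
    rintro x ⟨_, hx1⟩ ⟨_, hx1'⟩
    obtain ⟨b, -, rfl⟩ := Finset.mem_image.mp hβ
    obtain ⟨b', -, rfl⟩ := Finset.mem_image.mp hβ'
    exact hne ((mblock_eq_of_mem hx1).symm.trans (mblock_eq_of_mem hx1'))
  have hmeasb : ∀ β ∈ T, MeasurableSet {x : Config A | x 0 ∈ mblock a ∧ x 1 ∈ β} := by
    intro β hβ
    obtain ⟨b, -, rfl⟩ := Finset.mem_image.mp hβ
    have he : {x : Config A | x 0 ∈ mblock a ∧ x 1 ∈ mblock b}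
        = ((fun x : Config A => x 0) ⁻¹' mblock a) ∩ ((fun x : Config A => x 1) ⁻¹' mblock b) :=
      rfl
    rw [he]
    exact ((measurable_pi_apply 0) (measurableSet_mblock a)).inter
      ((measurable_pi_apply 1) (measurableSet_mblock b))
  have hsum := measure_biUnion_finset hdisj hmeasb (μ := ν)
  rw [← hcover] at hsum
  -- evaluate LHS
  have h1 : ν {x : Config A | x 0 ∈ mblock a} = ((c:ℝ≥0∞))⁻¹ ^ 1 := by
    have h := nu_sat ν hν {0} (fun _ => a)
    have he : {x : Config A | ∀ i ∈ ({0} : Finset ℤ), x i ∈ mblock ((fun _ => a) i)}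
        = {x : Config A | x 0 ∈ mblock a} := by
      ext x; simp
    rw [he] at h
    simpa using h
  -- evaluate terms
  have h2 : ∀ β ∈ T, ν {x : Config A | x 0 ∈ mblock a ∧ x 1 ∈ β} = ((c:ℝ≥0∞))⁻¹ ^ 2 := by
    intro β hβ
    obtain ⟨b, -, rfl⟩ := Finset.mem_image.mp hβ
    have h := nu_sat ν hν {0, 1} (fun i => if i = 0 then a else b)
    have he : {x : Config A | ∀ i ∈ ({0, 1} : Finset ℤ), x i ∈ mblock ((fun i : ℤ =>
        if i = 0 then a else b) i)} = {x : Config A | x 0 ∈ mblock a ∧ x 1 ∈ mblock b} := by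
      ext x
      simp only [Finset.mem_insert, Finset.mem_singleton, Set.mem_setOf_eq]
      constructor
      · intro hx
        refine ⟨?_, ?_⟩
        · simpa using hx 0 (Or.inl rfl)
        · simpa using hx 1 (Or.inr rfl)
      · rintro ⟨hx0, hx1⟩ i hi
        rcases hi with rfl | rfl
        · simpa using hx0
        · simpa using hx1
    rw [he] at h
    have hcard : ({0, 1} : Finset ℤ).card = 2 := by decide
    rw [hcard] at h
    exact h
  rw [h1, Finset.sum_congr rfl h2, Finset.sum_const, nsmul_eq_mul] at hsum
  -- derive T.card = c
  have key : ((c:ℝ≥0∞))⁻¹ * c = 1 := ENNReal.inv_mul_cancel hc0 hct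
  have hTc : (T.card : ℝ≥0∞) = (c : ℝ≥0∞) := by
    calc (T.card : ℝ≥0∞) = (T.card : ℝ≥0∞) * (((c:ℝ≥0∞))⁻¹ * c) * (((c:ℝ≥0∞))⁻¹ * c) := by
          rw [key]; ring
      _ = ((T.card : ℝ≥0∞) * ((c:ℝ≥0∞))⁻¹ ^ 2) * ((c:ℝ≥0∞) * c) := by ring
      _ = ((c:ℝ≥0∞))⁻¹ ^ 1 * ((c:ℝ≥0∞) * c) := by rw [← hsum]
      _ = (((c:ℝ≥0∞))⁻¹ * c) * c := by ring
      _ = c := by rw [key]; ring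
  have hTcard : T.card = c := by exact_mod_cast hTc
  have hinj : Set.InjOn (fun b : A => mblock b) ↑(Finset.univ : Finset A) := by
    apply Finset.injOn_of_card_image_eq
    rw [← hT, hTcard, Finset.card_univ, hc]
  ext b
  simp only [Set.mem_singleton_iff]
  constructor
  · intro hb
    exact hinj (Finset.mem_coe.mpr (Finset.mem_univ b)) (Finset.mem_coe.mpr (Finset.mem_univ a))
      (mblock_eq_of_mem hb)
  · intro hb
    rw [hb]
    exact mem_mblock_self a

lemma allMeasurable (ν : Measure (Config A)) (hν : IsUniformBernoulli ν) (S : Set A) :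
    MeasurableSet S := by
  have hsing : ∀ a : A, MeasurableSet ({a} : Set A) := by
    intro a
    rw [← mblock_eq_singleton ν hν a]
    exact measurableSet_mblock a
  have hS : S = ⋃ a ∈ S, {a} := by simp
  rw [hS]
  exact MeasurableSet.biUnion S.to_countable fun a _ => hsing a

end Atoms

section Comb

variable {A : Type*} [Fintype A] [Nonempty A]

/-- embed a finite word into a configuration, based at `a`, filling with junk elsewhere -/
noncomputable def emb (m : ℕ) (p : Fin m → A) (a : ℤ) : Config A :=
  fun j => if h : a ≤ j ∧ j < a + m then p ⟨(j - a).toNat, by omega⟩ else Classical.arbitrary A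

lemma emb_apply (m : ℕ) (p : Fin m → A) (a : ℤ) (j : ℤ) (h1 : a ≤ j) (h2 : j < a + m) :
    emb m p a j = p ⟨(j - a).toNat, by omega⟩ := dif_pos ⟨h1, h2⟩

lemma emb_apply_fin (m : ℕ) (p : Fin m → A) (a : ℤ) (t : Fin m) :
    emb m p a (a + (t : ℤ)) = p t := by
  have h1 : a ≤ a + (t : ℤ) := by omega
  have h2 : a + (t : ℤ) < a + m := by
    have := t.isLt; omega
  rw [emb_apply m p a _ h1 h2]
  congr 1
  apply Fin.ext
  simp only []
  omega

variable (F : Config A → Config A) (r : ℕ)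

/-- the image word of a word of length `n + 2r`, occupying positions `[0, n)`
(the input word is based at `-r`) -/
noncomputable def imw (n : ℕ) (p : Fin (n + 2 * r) → A) : Fin n → A :=
  fun t => F (emb (n + 2 * r) p (-(r : ℤ))) (t : ℤ)

/-- the set of preimage words of a word `w` -/
noncomputable def PreW (n : ℕ) (w : Fin n → A) : Finset (Fin (n + 2 * r) → A) :=
  Finset.univ.filter fun p => imw F r n p = w

/-- key bridging lemma: if `x` agrees with the word `p` on `[a - r, a + n + r)`,
then `F x` agrees with the image word of `p` on `[a, a + n)`. -/
lemma bridge
    (hloc : ∀ (i : ℤ) (x y : Config A),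
      (∀ j : ℤ, i - r ≤ j → j ≤ i + r → x j = y j) → F x i = F y i)
    (hcov : ∀ (k : ℤ) (x : Config A), F (fun j => x (j + k)) = fun j => F x (j + k))
    (n : ℕ) (p : Fin (n + 2 * r) → A) (x : Config A) (a : ℤ)
    (hx : ∀ s : Fin (n + 2 * r), x (a - r + (s : ℤ)) = p s) (t : Fin n) :
    F x (a + (t : ℤ)) = imw F r n p t := by
  have h1 : F x (a + (t : ℤ)) = F (fun j => x (j + a)) (t : ℤ) := by
    rw [hcov a x]
    congr 1
    ring
  rw [h1]
  unfold imw
  apply hloc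
  intro j hj1 hj2
  have htn : (t : ℤ) < n := by exact_mod_cast t.isLt
  have ht0 : (0 : ℤ) ≤ (t : ℤ) := Int.natCast_nonneg _
  have hb1 : -(r : ℤ) ≤ j := by omega
  have hb2 : j < -(r : ℤ) + ((n + 2 * r : ℕ) : ℤ) := by push_cast; omega
  have hemb := emb_apply (n + 2 * r) p (-(r : ℤ)) j hb1 hb2
  rw [hemb]
  have hs : ((j - -(r : ℤ)).toNat : ℤ) = j + r := by omega
  have := hx ⟨(j - -(r : ℤ)).toNat, by omega⟩
  rw [← this]
  congr 1
  simp only []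
  omega

lemma sum_Nc (n : ℕ) :
    ∑ w : Fin n → A, (PreW F r n w).card = Fintype.card A ^ (n + 2 * r) := by
  have h := Finset.card_eq_sum_card_fiberwise
    (s := (Finset.univ : Finset (Fin (n + 2 * r) → A)))
    (t := (Finset.univ : Finset (Fin n → A)))
    (f := imw F r n) (fun p _ => Finset.mem_univ _)
  rw [Finset.card_univ, Fintype.card_fun, Fintype.card_fin] at h
  unfold PreW
  exact h.symm

lemma exists_preimage_word
    (hloc : ∀ (i : ℤ) (x y : Config A),
      (∀ j : ℤ, i - r ≤ j → j ≤ i + r → x j = y j) → F x i = F y i)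
    (hcov : ∀ (k : ℤ) (x : Config A), F (fun j => x (j + k)) = fun j => F x (j + k))
    (hsurj : Function.Surjective F) (n : ℕ) (w : Fin n → A) :
    ∃ p : Fin (n + 2 * r) → A, imw F r n p = w := by
  obtain ⟨y, hy⟩ := hsurj (emb n w 0)
  refine ⟨fun s => y (-(r : ℤ) + (s : ℤ)), ?_⟩
  funext t
  have hb := bridge F r hloc hcov n (fun s => y (-(r : ℤ) + (s : ℤ))) y 0
    (fun s => by congr 1; ring) t
  rw [← hb, hy]
  have h0 : (0 : ℤ) + (t : ℤ) = 0 + (t : ℤ) := rfl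
  exact emb_apply_fin n w 0 t

lemma Nc_ge
    (hloc : ∀ (i : ℤ) (x y : Config A),
      (∀ j : ℤ, i - r ≤ j → j ≤ i + r → x j = y j) → F x i = F y i)
    (hcov : ∀ (k : ℤ) (x : Config A), F (fun j => x (j + k)) = fun j => F x (j + k))
    (hsurj : Function.Surjective F) (n : ℕ) (w : Fin n → A) :
    Fintype.card A ^ (2 * r) ≤ (PreW F r n w).card := by
  classical
  set c := Fintype.card A with hc
  set K := c ^ (2 * r) with hK
  set N := (PreW F r n w).card with hN
  -- N ≥ 1
  have hN1 : 1 ≤ N := by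
    obtain ⟨p, hp⟩ := exists_preimage_word F r hloc hcov hsurj n w
    refine Finset.card_pos.mpr ⟨p, ?_⟩
    simp only [PreW, Finset.mem_filter, Finset.mem_univ, true_and]
    exact hp
  set m := n + 2 * r with hm
  rcases Nat.eq_zero_or_pos m with hm0 | hm0
  · -- degenerate: n = 0 and r = 0
    have hr0 : r = 0 := by omega
    have : K = 1 := by rw [hK, hr0]; norm_num
    omega
  -- main case: key step inequality
  have hstep : ∀ j : ℕ, K ^ j ≤ N ^ (j + 1) := by
    intro j
    set L := j * m + n with hL
    have hL2 : L + 2 * r = (j + 1) * m := by rw [hL, hm]; ring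
    -- window index bound
    have win_pf : ∀ (i : Fin (j + 1)) (t : Fin m), i.val * m + t.val < L + 2 * r := by
      intro i t
      have h1 : i.val + 1 ≤ j + 1 := i.isLt
      have h2 := t.isLt
      have h3 : (i.val + 1) * m ≤ (j + 1) * m := Nat.mul_le_mul_right m h1
      have h5 : (i.val + 1) * m = i.val * m + m := by ring
      omega
    set S : Finset (Fin (L + 2 * r) → A) := Finset.univ.filter
      (fun q => ∀ i : Fin (j + 1),
        imw F r n (fun t => q ⟨i.val * m + t.val, win_pf i t⟩) = w) with hS
    -- Claim A : S.card = N ^ (j+1)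
    have claimA : S.card = N ^ (j + 1) := by
      have pf_div : ∀ s : Fin (L + 2 * r), s.val / m < j + 1 := by
        intro s
        rw [Nat.div_lt_iff_lt_mul hm0]
        have := s.isLt
        omega
      have pf_mod : ∀ s : Fin (L + 2 * r), s.val % m < n + 2 * r := fun s => by
        have := Nat.mod_lt s.val hm0; omega
      have hdiv : ∀ (i : Fin (j + 1)) (t : Fin (n + 2 * r)), (i.val * m + t.val) / m = i.val := by
        intro i t
        have htm : t.val < m := by have := t.isLt; omega
        rw [show i.val * m + t.val = t.val + m * i.val by ring,
          Nat.add_mul_div_left _ _ hm0, Nat.div_eq_of_lt htm]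
        omega
      have hmod : ∀ (i : Fin (j + 1)) (t : Fin (n + 2 * r)), (i.val * m + t.val) % m = t.val := by
        intro i t
        have htm : t.val < m := by have := t.isLt; omega
        rw [show i.val * m + t.val = t.val + i.val * m by ring,
          Nat.add_mul_mod_self_right, Nat.mod_eq_of_lt htm]
      have hcardT : (Fintype.piFinset (fun _ : Fin (j + 1) => PreW F r n w)).card
          = N ^ (j + 1) := by
        rw [Fintype.card_piFinset]
        simp [hN]
      rw [← hcardT]
      refine Finset.card_bij'
        (i := fun q _ => (fun i t => q ⟨i.val * m + t.val, win_pf i t⟩))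
        (j := fun P _ => (fun s => P ⟨s.val / m, pf_div s⟩ ⟨s.val % m, pf_mod s⟩))
        ?_ ?_ ?_ ?_
      · intro q hq
        rw [Fintype.mem_piFinset]
        intro i
        simp only [PreW, Finset.mem_filter, Finset.mem_univ, true_and]
        rw [hS, Finset.mem_filter] at hq
        exact hq.2 i
      · intro P hP
        rw [hS, Finset.mem_filter]
        refine ⟨Finset.mem_univ _, ?_⟩
        intro i
        rw [Fintype.mem_piFinset] at hP
        have hPi := hP i
        simp only [PreW, Finset.mem_filter, Finset.mem_univ, true_and] at hPi
        have heq : (fun t : Fin (n + 2 * r) =>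
            P ⟨((⟨i.val * m + t.val, win_pf i t⟩ : Fin (L + 2 * r)) : ℕ) / m, pf_div _⟩
              ⟨((⟨i.val * m + t.val, win_pf i t⟩ : Fin (L + 2 * r)) : ℕ) % m, pf_mod _⟩)
            = P i := by
          funext t
          exact congr (congrArg P (Fin.ext (hdiv i t))) (Fin.ext (hmod i t))
        rw [heq]
        exact hPi
      · intro q hq
        funext s
        have e1 : (s.val / m) * m + s.val % m = s.val := by
          rw [mul_comm]
          exact Nat.div_add_mod _ _
        exact congrArg q (Fin.ext e1)
      · intro P hP
        funext i t
        exact congr (congrArg P (Fin.ext (hdiv i t))) (Fin.ext (hmod i t))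
    -- pattern words
    have hnm : n ≤ m := by omega
    have pfL : ∀ (i : Fin (j + 1)) (t : Fin n), i.val * m + t.val < L := by
      intro i t
      have h1 : i.val ≤ j := by omega
      have h2 := t.isLt
      rcases Nat.lt_or_ge i.val j with hij | hij
      · have h3 : (i.val + 1) * m ≤ j * m := Nat.mul_le_mul_right m hij
        have h5 : (i.val + 1) * m = i.val * m + m := by ring
        omega
      · have : i.val = j := by omega
        rw [this, hL]
        omega
    have pfG : ∀ (i : Fin j) (s' : Fin (2 * r)), i.val * m + n + s'.val < L := by
      intro i s'
      have h1 : i.val + 1 ≤ j := i.isLt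
      have h3 : (i.val + 1) * m ≤ j * m := Nat.mul_le_mul_right m h1
      have h5 : (i.val + 1) * m = i.val * m + m := by ring
      have h2 := s'.isLt
      omega
    have gap_div_pf : ∀ s : Fin L, ¬(s.val % m < n) → s.val / m < j := by
      intro s hs
      by_contra hge
      push_neg at hge
      have h1 : m * (s.val / m) + s.val % m = s.val := Nat.div_add_mod _ _
      have h2 : m * j ≤ m * (s.val / m) := Nat.mul_le_mul_left m hge
      have h3 : m * j = j * m := by ring
      have h4 : s.val < j * m + n := by have := s.isLt; omega
      omega
    have gap_mod_pf : ∀ s : Fin L, ¬(s.val % m < n) → s.val % m - n < 2 * r := by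
      intro s hs
      have h1 : s.val % m < m := Nat.mod_lt _ hm0
      omega
    set wext : ℕ → A := fun k => if h : k < n then w ⟨k, h⟩ else Classical.arbitrary A
      with hwext
    have hwextA : ∀ (k : ℕ) (h : k < n), wext k = w ⟨k, h⟩ := fun k h => dif_pos h
    set gext : (Fin j → Fin (2 * r) → A) → ℕ → ℕ → A := fun γ d g =>
      if h : d < j ∧ g < 2 * r then γ ⟨d, h.1⟩ ⟨g, h.2⟩ else Classical.arbitrary A with hgext
    have hgextA : ∀ (γ : Fin j → Fin (2 * r) → A) (i : Fin j) (s' : Fin (2 * r)),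
        gext γ i.val s'.val = γ i s' := by
      intro γ i s'
      rw [hgext]
      simp only []
      rw [dif_pos ⟨i.isLt, s'.isLt⟩]
    set zdef : (Fin j → Fin (2 * r) → A) → Fin L → A := fun γ s =>
      if s.val % m < n then wext (s.val % m)
      else gext γ (s.val / m) (s.val % m - n) with hzdef
    -- pattern property
    have hpat : ∀ (γ : Fin j → Fin (2 * r) → A) (i : Fin (j + 1)) (t : Fin n),
        zdef γ ⟨i.val * m + t.val, pfL i t⟩ = w t := by
      intro γ i t
      have htm : t.val < m := by have := t.isLt; omega
      have hmodL : ((⟨i.val * m + t.val, pfL i t⟩ : Fin L) : ℕ) % m = t.val := by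
        show (i.val * m + t.val) % m = t.val
        rw [show i.val * m + t.val = t.val + i.val * m by ring,
          Nat.add_mul_mod_self_right, Nat.mod_eq_of_lt htm]
      rw [hzdef]
      simp only []
      rw [hmodL, if_pos t.isLt, hwextA t.val t.isLt]
    -- gap readback
    have hgap : ∀ (γ : Fin j → Fin (2 * r) → A) (i : Fin j) (s' : Fin (2 * r)),
        zdef γ ⟨i.val * m + n + s'.val, pfG i s'⟩ = γ i s' := by
      intro γ i s'
      have hlt : n + s'.val < m := by have := s'.isLt; omega
      have hmodG : ((⟨i.val * m + n + s'.val, pfG i s'⟩ : Fin L) : ℕ) % m = n + s'.val := by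
        show (i.val * m + n + s'.val) % m = n + s'.val
        rw [show i.val * m + n + s'.val = (n + s'.val) + i.val * m by ring,
          Nat.add_mul_mod_self_right, Nat.mod_eq_of_lt hlt]
      have hdivG : ((⟨i.val * m + n + s'.val, pfG i s'⟩ : Fin L) : ℕ) / m = i.val := by
        show (i.val * m + n + s'.val) / m = i.val
        rw [show i.val * m + n + s'.val = (n + s'.val) + m * i.val by ring,
          Nat.add_mul_div_left _ _ hm0, Nat.div_eq_of_lt hlt]
        omega
      rw [hzdef]
      simp only []
      rw [hmodG, hdivG, if_neg (by omega)]
      rw [show n + s'.val - n = s'.val by omega]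
      exact hgextA γ i s'
    -- every pattern has a preimage in S
    have hex : ∀ γ : Fin j → Fin (2 * r) → A,
        ∃ q, q ∈ S ∧ imw F r L q = zdef γ := by
      intro γ
      obtain ⟨p, hp⟩ := exists_preimage_word F r hloc hcov hsurj L (zdef γ)
      refine ⟨p, ?_, hp⟩
      rw [hS, Finset.mem_filter]
      refine ⟨Finset.mem_univ _, ?_⟩
      intro i
      funext t
      set x := emb (L + 2 * r) p (-(r : ℤ)) with hx
      have hbw := bridge F r hloc hcov n (fun t : Fin m => p ⟨i.val * m + t.val, win_pf i t⟩)
        x ((i.val * m : ℕ) : ℤ) ?_ t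
      · -- hbw : F x (i*m + t) = imw ... t
        rw [← hbw]
        set t' : Fin L := ⟨i.val * m + t.val, pfL i t⟩ with ht'
        have h2 : imw F r L p t' = F x (t' : ℤ) := rfl
        have h3 : ((i.val * m : ℕ) : ℤ) + (t : ℤ) = (t' : ℤ) := by
          rw [ht']
          push_cast
          ring
        rw [h3, ← h2, hp]
        exact hpat γ i t
      · intro s
        have hlt : i.val * m + s.val < L + 2 * r := win_pf i s
        have h5 := emb_apply_fin (L + 2 * r) p (-(r : ℤ)) ⟨i.val * m + s.val, hlt⟩
        show emb (L + 2 * r) p (-(r : ℤ)) (((i.val * m : ℕ) : ℤ) - r + (s : ℤ))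
          = p ⟨i.val * m + s.val, hlt⟩
        rw [← h5]
        congr 1
        push_cast
        ring
    -- injection from gap assignments into S
    have hinj : ∀ γ γ' : Fin j → Fin (2 * r) → A,
        Classical.choose (hex γ) = Classical.choose (hex γ') → γ = γ' := by
      intro γ γ' h
      have h1 := (Classical.choose_spec (hex γ)).2
      have h2 := (Classical.choose_spec (hex γ')).2
      rw [h] at h1
      have hz : zdef γ = zdef γ' := by rw [← h1]; exact h2
      funext i s'
      rw [← hgap γ i s', ← hgap γ' i s', hz]
    have hcard : (Finset.univ : Finset (Fin j → Fin (2 * r) → A)).card ≤ S.card := by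
      apply Finset.card_le_card_of_injOn (fun γ => Classical.choose (hex γ))
      · intro γ _
        exact (Classical.choose_spec (hex γ)).1
      · intro γ _ γ' _ h
        exact hinj γ γ' h
    have hcardΓ : (Finset.univ : Finset (Fin j → Fin (2 * r) → A)).card = K ^ j := by
      rw [Finset.card_univ]
      rw [Fintype.card_fun]
      rw [Fintype.card_fun]
      simp [hK, hc]
    rw [← claimA, ← hcardΓ]
    exact hcard
  -- numeric conclusion
  by_contra hlt
  push_neg at hlt
  have hK2 : 2 ≤ K := by omega
  -- key : (K-1)^t * (K + t) ≤ K^(t+1)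
  have key : ∀ t : ℕ, (K - 1) ^ t * (K + t) ≤ K ^ (t + 1) := by
    intro t
    induction t with
    | zero => simp
    | succ t ih =>
      have hstep2 : (K - 1) * (K + t + 1) ≤ K * (K + t) := by
        have h6 : (K - 1) * (K + t + 1) = (K - 1) * (K + t) + (K - 1) := by ring
        have h8 : K - 1 + 1 = K := by omega
        have h7 : K * (K + t) = (K - 1) * (K + t) + (K + t) := by
          calc K * (K + t) = (K - 1 + 1) * (K + t) := by rw [h8]
            _ = (K - 1) * (K + t) + (K + t) := by ring
        omega
      calc (K - 1) ^ (t + 1) * (K + (t + 1))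
          = (K - 1) ^ t * ((K - 1) * (K + t + 1)) := by ring
        _ ≤ (K - 1) ^ t * (K * (K + t)) := Nat.mul_le_mul_left _ hstep2
        _ = ((K - 1) ^ t * (K + t)) * K := by ring
        _ ≤ K ^ (t + 1) * K := Nat.mul_le_mul_right _ ih
        _ = K ^ (t + 2) := by ring
  have h0 : 0 < (K - 1) ^ (K ^ 2 + 1) := pow_pos (by omega) _
  have hA : K ^ (K ^ 2) ≤ (K - 1) ^ (K ^ 2 + 1) := by
    calc K ^ (K ^ 2) ≤ N ^ (K ^ 2 + 1) := hstep (K ^ 2)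
      _ ≤ (K - 1) ^ (K ^ 2 + 1) := Nat.pow_le_pow_left (by omega) _
  have hB : (K - 1) ^ (K ^ 2 + 1) * (K + (K ^ 2 + 1)) ≤ K ^ (K ^ 2 + 2) := key (K ^ 2 + 1)
  have hC : (K - 1) ^ (K ^ 2 + 1) * (K ^ 2) < (K - 1) ^ (K ^ 2 + 1) * (K + (K ^ 2 + 1)) := by
    exact mul_lt_mul_of_pos_left (by omega) h0
  have hD : K ^ (K ^ 2) * K ^ 2 ≤ (K - 1) ^ (K ^ 2 + 1) * K ^ 2 :=
    Nat.mul_le_mul_right _ hA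
  have hE : K ^ (K ^ 2 + 2) = K ^ (K ^ 2) * K ^ 2 := by ring
  omega

/-- **Balance theorem**: every word of length `n` has exactly `|A|^{2r}` preimage words -/
lemma Nc_eq
    (hloc : ∀ (i : ℤ) (x y : Config A),
      (∀ j : ℤ, i - r ≤ j → j ≤ i + r → x j = y j) → F x i = F y i)
    (hcov : ∀ (k : ℤ) (x : Config A), F (fun j => x (j + k)) = fun j => F x (j + k))
    (hsurj : Function.Surjective F) (n : ℕ) (w : Fin n → A) :
    (PreW F r n w).card = Fintype.card A ^ (2 * r) := by
  classical
  by_contra hne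
  have hgt : Fintype.card A ^ (2 * r) < (PreW F r n w).card :=
    lt_of_le_of_ne (Nc_ge F r hloc hcov hsurj n w) (Ne.symm hne)
  have hsum := sum_Nc F r n
  have hlt : ∑ w' : Fin n → A, Fintype.card A ^ (2 * r)
      < ∑ w' : Fin n → A, (PreW F r n w').card := by
    apply Finset.sum_lt_sum
    · intro w' _
      exact Nc_ge F r hloc hcov hsurj n w'
    · exact ⟨w, Finset.mem_univ _, hgt⟩
  rw [hsum, Finset.sum_const, Finset.card_univ, Fintype.card_fun, Fintype.card_fin,
    smul_eq_mul, ← pow_add] at hlt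
  exact lt_irrefl _ hlt

end Comb

section MeasurePart

variable {A : Type*} [Fintype A] [Nonempty A] [MeasurableSpace A]

lemma measurable_cylSet (ν : Measure (Config A)) (hν : IsUniformBernoulli ν)
    (s : Finset ℤ) (u : ℤ → A) :
    MeasurableSet {x : Config A | ∀ i ∈ s, x i = u i} := by
  have he : {x : Config A | ∀ i ∈ s, x i = u i}
      = ⋂ i ∈ s, (fun x : Config A => x i) ⁻¹' {u i} := by
    ext x; simp
  rw [he]
  exact MeasurableSet.biInter s.countable_toSet
    (fun i _ => (measurable_pi_apply i) (allMeasurable ν hν {u i}))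

/-- cylinder determined by a word -/
def finCyl (a : ℤ) (m : ℕ) (p : Fin m → A) : Set (Config A) :=
  {x : Config A | ∀ t : Fin m, x (a + (t : ℤ)) = p t}

lemma finCyl_eq_cylSet (a : ℤ) (m : ℕ) (p : Fin m → A) :
    finCyl a m p = {x : Config A | ∀ i ∈ Finset.Icc a (a + m - 1), x i = emb m p a i} := by
  ext x
  simp only [finCyl, Set.mem_setOf_eq, Finset.mem_Icc]
  constructor
  · intro hx i hi
    have h1 : 0 ≤ i - a := by omega
    have h2 : i - a < m := by omega
    set t : Fin m := ⟨(i - a).toNat, by omega⟩ with ht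
    have hia : i = a + (t : ℤ) := by rw [ht]; simp only []; omega
    rw [hia, hx t, emb_apply_fin m p a t]
  · intro hx t
    have hti : a ≤ a + (t : ℤ) ∧ a + (t : ℤ) ≤ a + m - 1 := by
      have := t.isLt; omega
    rw [hx _ hti, emb_apply_fin m p a t]

lemma measurable_finCyl (ν : Measure (Config A)) (hν : IsUniformBernoulli ν)
    (a : ℤ) (m : ℕ) (p : Fin m → A) : MeasurableSet (finCyl a m p) := by
  rw [finCyl_eq_cylSet]
  exact measurable_cylSet ν hν _ _

lemma nu_finCyl (ν : Measure (Config A)) (hν : IsUniformBernoulli ν)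
    (a : ℤ) (m : ℕ) (p : Fin m → A) :
    ν (finCyl a m p) = ((Fintype.card A : ℝ≥0∞))⁻¹ ^ m := by
  rw [finCyl_eq_cylSet]
  rw [hν (Finset.Icc a (a + m - 1)) (emb m p a)]
  congr 1
  rw [Int.card_Icc]
  omega

lemma Icc_cyl_eq_finCyl (a b : ℤ) (g : ℤ → A) :
    {x : Config A | ∀ i ∈ Finset.Icc a b, x i = g i}
      = finCyl a ((b + 1 - a).toNat) (fun t => g (a + (t : ℤ))) := by
  ext x
  simp only [finCyl, Set.mem_setOf_eq, Finset.mem_Icc]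
  constructor
  · intro hx t
    have := t.isLt
    exact hx _ (by omega)
  · intro hx i hi
    have h2 : i - a < ((b + 1 - a).toNat : ℤ) := by omega
    set t : Fin ((b + 1 - a).toNat) := ⟨(i - a).toNat, by omega⟩ with ht
    have hia : i = a + (t : ℤ) := by rw [ht]; simp only []; omega
    rw [hia]
    exact hx t

variable (F : Config A → Config A) (r : ℕ)

lemma preimage_finCyl
    (hloc : ∀ (i : ℤ) (x y : Config A),
      (∀ j : ℤ, i - r ≤ j → j ≤ i + r → x j = y j) → F x i = F y i)
    (hcov : ∀ (k : ℤ) (x : Config A), F (fun j => x (j + k)) = fun j => F x (j + k))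
    (a : ℤ) (n : ℕ) (w : Fin n → A) :
    F ⁻¹' (finCyl a n w) = ⋃ p ∈ PreW F r n w, finCyl (a - r) (n + 2 * r) p := by
  ext x
  simp only [Set.mem_preimage, finCyl, Set.mem_setOf_eq, Set.mem_iUnion]
  constructor
  · intro hx
    set p : Fin (n + 2 * r) → A := fun s => x (a - r + (s : ℤ)) with hp
    have himw : imw F r n p = w := by
      funext t
      have hb := bridge F r hloc hcov n p x a (fun s => rfl) t
      rw [← hb]
      exact hx t
    refine ⟨p, ?_, ?_⟩
    · simp only [PreW, Finset.mem_filter, Finset.mem_univ, true_and]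
      exact himw
    · intro s
      rfl
  · rintro ⟨p, hpmem, hxp⟩ t
    simp only [PreW, Finset.mem_filter, Finset.mem_univ, true_and] at hpmem
    have hb := bridge F r hloc hcov n p x a (fun s => hxp s) t
    rw [hb, hpmem]

lemma nu_preimage_finCyl (ν : Measure (Config A)) (hν : IsUniformBernoulli ν)
    (hloc : ∀ (i : ℤ) (x y : Config A),
      (∀ j : ℤ, i - r ≤ j → j ≤ i + r → x j = y j) → F x i = F y i)
    (hcov : ∀ (k : ℤ) (x : Config A), F (fun j => x (j + k)) = fun j => F x (j + k))
    (hsurj : Function.Surjective F)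
    (a : ℤ) (n : ℕ) (w : Fin n → A) :
    ν (F ⁻¹' (finCyl a n w)) = ν (finCyl a n w) := by
  classical
  set c := Fintype.card A with hc
  have hc0 : (c : ℝ≥0∞) ≠ 0 := by
    simp only [ne_eq, Nat.cast_eq_zero, hc]; exact Fintype.card_ne_zero
  have hct : (c : ℝ≥0∞) ≠ ⊤ := ENNReal.natCast_ne_top c
  rw [preimage_finCyl F r hloc hcov a n w]
  have hdisj : (↑(PreW F r n w) : Set (Fin (n + 2 * r) → A)).PairwiseDisjoint
      (fun p => finCyl (a - r) (n + 2 * r) p) := by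
    intro p _ p' _ hne
    refine Set.disjoint_left.mpr ?_
    intro x hx hx'
    apply hne
    funext s
    rw [← hx s, ← hx' s]
  rw [measure_biUnion_finset hdisj (fun p _ => measurable_finCyl ν hν _ _ p)]
  have hval : ∀ p ∈ PreW F r n w,
      ν (finCyl (a - r) (n + 2 * r) p) = ((c : ℝ≥0∞))⁻¹ ^ (n + 2 * r) :=
    fun p _ => nu_finCyl ν hν _ _ p
  rw [Finset.sum_congr rfl hval, Finset.sum_const,
    Nc_eq F r hloc hcov hsurj n w, nsmul_eq_mul, nu_finCyl ν hν a n w]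
  push_cast
  rw [pow_add]
  calc (c : ℝ≥0∞) ^ (2 * r) * (((c : ℝ≥0∞))⁻¹ ^ n * ((c : ℝ≥0∞))⁻¹ ^ (2 * r))
      = ((c : ℝ≥0∞))⁻¹ ^ n * ((c : ℝ≥0∞) * ((c : ℝ≥0∞))⁻¹) ^ (2 * r) := by
        rw [mul_pow]; ring
    _ = ((c : ℝ≥0∞))⁻¹ ^ n := by
        rw [ENNReal.mul_inv_cancel hc0 hct, one_pow, mul_one]

lemma F_measurable (ν : Measure (Config A)) (hν : IsUniformBernoulli ν)
    (hloc : ∀ (i : ℤ) (x y : Config A),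
      (∀ j : ℤ, i - r ≤ j → j ≤ i + r → x j = y j) → F x i = F y i)
    (hcov : ∀ (k : ℤ) (x : Config A), F (fun j => x (j + k)) = fun j => F x (j + k)) :
    Measurable F := by
  rw [measurable_pi_iff]
  intro i
  intro S _
  have key : ∀ (x : Config A) (aa : A), (∀ t : Fin 1, F x (i + (t : ℤ)) = aa) ↔ F x i = aa := by
    intro x aa
    rw [Fin.forall_fin_one]
    simp
  have he : (fun x => F x i) ⁻¹' S = ⋃ aa ∈ S, F ⁻¹' (finCyl i 1 (fun _ => aa)) := by
    ext x
    simp only [Set.mem_preimage, Set.mem_iUnion, finCyl, Set.mem_setOf_eq]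
    constructor
    · intro hx
      exact ⟨F x i, hx, (key x (F x i)).mpr rfl⟩
    · rintro ⟨aa, ha, hx⟩
      rw [(key x aa).mp hx]
      exact ha
  rw [he]
  refine MeasurableSet.biUnion S.to_countable (fun aa _ => ?_)
  rw [preimage_finCyl F r hloc hcov i 1 (fun _ => aa)]
  exact (PreW F r 1 (fun _ => aa)).measurableSet_biUnion
    (fun p _ => measurable_finCyl ν hν _ _ p)

lemma nu_preimage_cylSet (ν : Measure (Config A)) (hν : IsUniformBernoulli ν)
    (hloc : ∀ (i : ℤ) (x y : Config A),
      (∀ j : ℤ, i - r ≤ j → j ≤ i + r → x j = y j) → F x i = F y i)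
    (hcov : ∀ (k : ℤ) (x : Config A), F (fun j => x (j + k)) = fun j => F x (j + k))
    (hsurj : Function.Surjective F)
    (s : Finset ℤ) (u : ℤ → A) :
    ν (F ⁻¹' {x : Config A | ∀ i ∈ s, x i = u i}) = ν {x : Config A | ∀ i ∈ s, x i = u i} := by
  classical
  rcases Finset.eq_empty_or_nonempty s with rfl | hs
  · have he : {x : Config A | ∀ i ∈ (∅ : Finset ℤ), x i = u i} = Set.univ := by
      ext x; simp
    rw [he, Set.preimage_univ]
  · set a := s.min' hs with ha
    set b := s.max' hs with hb
    set I : Finset ℤ := Finset.Icc a b with hI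
    have hsub : s ⊆ I := fun i hi => Finset.mem_Icc.mpr ⟨s.min'_le i hi, s.le_max' i hi⟩
    set ext : ({ i // i ∈ I } → A) → (ℤ → A) := fun v i =>
      if h : i ∈ I then v ⟨i, h⟩ else u i with hext
    set V : Finset ({ i // i ∈ I } → A) := Finset.univ.filter
      (fun v => ∀ i : { i // i ∈ I }, (i : ℤ) ∈ s → v i = u i) with hV
    have hdec : {x : Config A | ∀ i ∈ s, x i = u i}
        = ⋃ v ∈ V, {x : Config A | ∀ i ∈ I, x i = ext v i} := by
      ext x
      simp only [Set.mem_setOf_eq, Set.mem_iUnion]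
      constructor
      · intro hx
        refine ⟨fun i => x i, ?_, ?_⟩
        · rw [hV, Finset.mem_filter]
          exact ⟨Finset.mem_univ _, fun i hi => hx i hi⟩
        · intro i hi
          rw [hext]
          simp only []
          rw [dif_pos hi]
      · rintro ⟨v, hvV, hxv⟩ i hi
        have hiI := hsub hi
        have h1 := hxv i hiI
        rw [hext] at h1
        simp only [] at h1
        rw [dif_pos hiI] at h1
        rw [hV, Finset.mem_filter] at hvV
        rw [h1]
        exact hvV.2 ⟨i, hiI⟩ hi
    have hdisjI : (↑V : Set ({ i // i ∈ I } → A)).PairwiseDisjoint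
        (fun v => {x : Config A | ∀ i ∈ I, x i = ext v i}) := by
      intro v _ v' _ hne
      refine Set.disjoint_left.mpr ?_
      intro x hx hx'
      apply hne
      funext i
      have h1 := hx (i : ℤ) i.2
      have h2 := hx' (i : ℤ) i.2
      rw [hext] at h1 h2
      simp only [] at h1 h2
      rw [dif_pos i.2] at h1 h2
      exact h1.symm.trans h2
    have hab : a ≤ b := s.min'_le b (s.max'_mem hs)
    have hmeasI : ∀ v, MeasurableSet {x : Config A | ∀ i ∈ I, x i = ext v i} :=
      fun v => measurable_cylSet ν hν I (ext v)
    have hpreI : ∀ v, ν (F ⁻¹' {x : Config A | ∀ i ∈ I, x i = ext v i})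
        = ν {x : Config A | ∀ i ∈ I, x i = ext v i} := by
      intro v
      rw [hI, Icc_cyl_eq_finCyl a b (ext v)]
      exact nu_preimage_finCyl F r ν hν hloc hcov hsurj a _ _
    rw [hdec, Set.preimage_iUnion₂]
    have hdisjP : (↑V : Set ({ i // i ∈ I } → A)).PairwiseDisjoint
        (fun v => F ⁻¹' {x : Config A | ∀ i ∈ I, x i = ext v i}) :=
      fun v hv v' hv' hne => Disjoint.preimage F (hdisjI hv hv' hne)
    have hFm := F_measurable F r ν hν hloc hcov
    rw [measure_biUnion_finset hdisjP (fun v _ => hFm (hmeasI v)),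
      measure_biUnion_finset hdisjI (fun v _ => hmeasI v)]
    exact Finset.sum_congr rfl (fun v _ => hpreI v)

end MeasurePart

section Final

variable {A : Type*} [Fintype A] [Nonempty A] [MeasurableSpace A]

/-- the family of cylinder sets -/
def CylF (A : Type*) : Set (Set (Config A)) :=
  {E | ∃ (s : Finset ℤ) (u : ℤ → A), E = {x : Config A | ∀ i ∈ s, x i = u i}}

lemma isPiSystem_CylF : IsPiSystem (CylF A) := by
  rintro E1 ⟨s, u, rfl⟩ E2 ⟨t, v, rfl⟩ hne
  obtain ⟨x0, hx1, hx2⟩ := hne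
  refine ⟨s ∪ t, fun i => if i ∈ s then u i else v i, ?_⟩
  ext x
  simp only [Set.mem_inter_iff, Set.mem_setOf_eq, Finset.mem_union]
  constructor
  · rintro ⟨h1, h2⟩ i hi
    by_cases his : i ∈ s
    · rw [if_pos his]; exact h1 i his
    · rw [if_neg his]; exact h2 i (by tauto)
  · intro h
    constructor
    · intro i hi
      have := h i (Or.inl hi)
      rw [if_pos hi] at this
      exact this
    · intro i hi
      by_cases his : i ∈ s
      · have hcomp : u i = v i := by
          rw [← hx1 i his, ← hx2 i hi]
        have := h i (Or.inl his)
        rw [if_pos his] at this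
        rw [this, hcomp]
      · have := h i (Or.inr hi)
        rw [if_neg his] at this
        exact this

lemma generateFrom_CylF (ν : Measure (Config A)) (hν : IsUniformBernoulli ν) :
    (inferInstance : MeasurableSpace (Config A)) = MeasurableSpace.generateFrom (CylF A) := by
  apply le_antisymm
  · rw [MeasurableSpace.le_def]
    intro E hE
    refine pi_le_trick (m' := MeasurableSpace.generateFrom (CylF A)) ?_ E hE
    intro i S _
    have he : (fun x : Config A => x i) ⁻¹' S
        = ⋃ a ∈ S, {x : Config A | ∀ i' ∈ ({i} : Finset ℤ), x i' = a} := by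
      ext x
      simp only [Set.mem_preimage, Set.mem_iUnion, Set.mem_setOf_eq, Finset.mem_singleton]
      constructor
      · intro hx
        exact ⟨x i, hx, fun i' hi' => by rw [hi']⟩
      · rintro ⟨a, ha, hx⟩
        rw [hx i rfl]
        exact ha
    rw [he]
    refine MeasurableSet.biUnion S.to_countable (fun a _ => ?_)
    exact MeasurableSpace.measurableSet_generateFrom ⟨{i}, fun _ => a, rfl⟩
  · apply MeasurableSpace.generateFrom_le
    rintro E ⟨s, u, rfl⟩
    exact measurable_cylSet ν hν s u

end Final


/-- The uniform Bernoulli measure `ν` is invariant under a cellular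
automaton `F` if and only if `F` is surjective. -/
theorem uniform_measure_invariant_iff_surjective
    {A : Type*} [Fintype A] [Nonempty A] [MeasurableSpace A]
    [TopologicalSpace A] [DiscreteTopology A]
    (F : Config A → Config A) (hFcont : Continuous F)
    (hFshift : F ∘ shift = shift ∘ F)
    (ν : MeasureTheory.Measure (Config A)) (hν : IsUniformBernoulli ν) :
    (∀ E : Set (Config A), MeasurableSet E → ν (F ⁻¹' E) = ν E) ↔
      Function.Surjective F := by
  have hc0 : ((Fintype.card A : ℝ≥0∞)) ≠ 0 := by
    simp only [ne_eq, Nat.cast_eq_zero]; exact Fintype.card_ne_zero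
  have hct : ((Fintype.card A : ℝ≥0∞)) ≠ ⊤ := ENNReal.natCast_ne_top _
  constructor
  · -- invariance → surjective
    intro hinv
    by_contra hns
    rw [Function.Surjective] at hns
    push_neg at hns
    obtain ⟨z, hz⟩ := hns
    have hcomp : IsCompact (Set.range F) := isCompact_range hFcont
    have hopen : IsOpen (Set.range F)ᶜ := hcomp.isClosed.isOpen_compl
    have hzmem : z ∈ (Set.range F)ᶜ := by
      simp only [Set.mem_compl_iff, Set.mem_range]
      rintro ⟨y, hy⟩
      exact hz y hy
    obtain ⟨I, uu, hIu, hsub⟩ := isOpen_pi_iff.mp hopen z hzmem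
    set C := {x : Config A | ∀ i ∈ I, x i = z i} with hC
    have hCsub : C ⊆ (Set.range F)ᶜ := by
      intro x hx
      apply hsub
      intro i hi
      rw [hx i hi]
      exact (hIu i hi).2
    have hpre : F ⁻¹' C = ∅ := by
      ext x
      simp only [Set.mem_preimage, Set.mem_empty_iff_false, iff_false]
      intro hxC
      exact (hCsub hxC) ⟨x, rfl⟩
    have hinvC := hinv C (measurable_cylSet ν hν I z)
    rw [hpre, measure_empty, hν I z] at hinvC
    exact (pow_ne_zero I.card (ENNReal.inv_ne_zero.mpr hct)) hinvC.symm
  · -- surjective → invariance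
    intro hsurj
    obtain ⟨r, hr⟩ := exists_radius F hFcont
    have hcov := shift_comm_all F hFshift
    have hloc : ∀ (i : ℤ) (x y : Config A),
        (∀ j : ℤ, i - r ≤ j → j ≤ i + r → x j = y j) → F x i = F y i := by
      intro i x y hagree
      have h1 : F x i = F (fun j => x (j + i)) 0 := by
        have := congrFun (hcov i x) 0
        rw [zero_add] at this
        exact this.symm
      have h2 : F y i = F (fun j => y (j + i)) 0 := by
        have := congrFun (hcov i y) 0
        rw [zero_add] at this
        exact this.symm
      rw [h1, h2]
      apply hr
      intro j hj1 hj2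
      exact hagree (j + i) (by omega) (by omega)
    have hFm := F_measurable F r ν hν hloc hcov
    have hprob : IsProbabilityMeasure ν := by
      constructor
      have h1 : {x : Config A | ∀ i ∈ (∅ : Finset ℤ), x i = (fun _ => Classical.arbitrary A) i}
          = Set.univ := by
        ext x; simp
      have h2 := hν ∅ (fun _ => Classical.arbitrary A)
      rw [h1] at h2
      rw [h2]
      simp
    haveI := hprob
    haveI : IsProbabilityMeasure (ν.map F) := Measure.isProbabilityMeasure_map hFm.aemeasurable
    have hmap : ν.map F = ν := by
      refine ext_of_generate_finite (CylF A) (generateFrom_CylF ν hν) isPiSystem_CylF ?_ ?_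
      · rintro E ⟨s, u, rfl⟩
        rw [Measure.map_apply hFm (measurable_cylSet ν hν s u)]
        exact nu_preimage_cylSet F r ν hν hloc hcov hsurj s u
      · rw [Measure.map_apply hFm MeasurableSet.univ, Set.preimage_univ]
    intro E hE
    calc ν (F ⁻¹' E) = ν.map F E := (Measure.map_apply hFm hE).symm
      _ = ν E := by rw [hmap]
end

section
/- Let F be a cellular automaton on A^ℤ and μ a Borel probability measure on A^ℤ that is invariant under both the shift σ and F, and ergodic for σ. If the system (A^ℤ, σ, μ) has discrete spectrum (the closed linear span in L²(μ) of the eigenfunctions of the Koopman operator g ↦ g∘σ is all of L²(μ)), then (A^ℤ, F, μ) also has discrete spectrum. -/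
open MeasureTheory Function Set
open scoped Classical ENNReal

/-- The measure-preserving system given by `T` on `(X, μ)` has discrete spectrum: the
closed linear span in `L²(μ)` of the eigenfunctions of the Koopman operator `g ↦ g ∘ T`
is all of `L²(μ)`. -/
def HasDiscreteSpectrum {X : Type*} [MeasurableSpace X] (T : X → X)
    (μ : MeasureTheory.Measure X) : Prop :=
  (Submodule.span ℂ {g : MeasureTheory.Lp ℂ 2 μ | g ≠ 0 ∧ ∃ c : ℂ,
      ∀ᵐ z ∂μ, (g : X → ℂ) (T z) = c * (g : X → ℂ) z}).topologicalClosure = ⊤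

/-!
The Koopman operators of `σ` and `F` commute, so `F` maps each eigenspace of `σ` into
itself. Since `σ` is ergodic, an eigenfunction `g` of `σ` vanishes almost nowhere and
its eigenspace is one-dimensional: the ratio `g ∘ F / g` is `σ`-invariant, hence a.e.
constant, and so `g` is an eigenfunction of `F` as well. Hence the dense span of the
eigenfunctions of `σ` lies in the span of the eigenfunctions of `F`.
-/

section Eigenfunctions

variable {X : Type*} [MeasurableSpace X] {μ : Measure X} {T S : X → X} {g : X → ℂ} {c : ℂ}

theorem MeasureTheory.MeasurePreserving.eigenvalue_ne_zero (hT : MeasurePreserving T μ μ)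
    (hgm : AEStronglyMeasurable g μ) (hg : ¬ g =ᵐ[μ] 0)
    (hc : ∀ᵐ z ∂μ, g (T z) = c * g z) : c ≠ 0 := by
  rintro rfl
  have hcomp : g ∘ T =ᵐ[μ] 0 := by
    filter_upwards [hc] with z hz using by simpa using hz
  have hnorm : eLpNorm g 1 μ = 0 := by
    rw [← eLpNorm_comp_measurePreserving hgm hT, eLpNorm_congr_ae hcomp, eLpNorm_zero]
  exact hg ((eLpNorm_eq_zero_iff hgm one_ne_zero).1 hnorm)

theorem Ergodic.ae_ne_zero_of_eigenfunction (hT : Ergodic T μ)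
    (hgm : AEStronglyMeasurable g μ) (hg : ¬ g =ᵐ[μ] 0)
    (hc : ∀ᵐ z ∂μ, g (T z) = c * g z) : ∀ᵐ z ∂μ, g z ≠ 0 := by
  have hc0 : c ≠ 0 := hT.toMeasurePreserving.eigenvalue_ne_zero hgm hg hc
  have hZm : NullMeasurableSet {z | g z = 0} μ :=
    hgm.aemeasurable.nullMeasurable (measurableSet_singleton 0)
  have hZinv : T ⁻¹' {z | g z = 0} =ᵐ[μ] {z | g z = 0} := by
    rw [Filter.eventuallyEq_set]
    filter_upwards [hc] with z hz
    simp [hz, hc0]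
  rcases hT.quasiErgodic.ae_mem_or_ae_notMem₀ hZm hZinv with hZ | hZ
  · exact absurd hZ hg
  · exact hZ

theorem Ergodic.eigenfunction_of_commute (hT : Ergodic T μ)
    (hS : Measure.QuasiMeasurePreserving S μ μ) (hST : Function.Commute S T)
    (hgm : AEStronglyMeasurable g μ) (hg : ¬ g =ᵐ[μ] 0)
    (hc : ∀ᵐ z ∂μ, g (T z) = c * g z) : ∃ d : ℂ, ∀ᵐ z ∂μ, g (S z) = d * g z := by
  have hc0 : c ≠ 0 := hT.toMeasurePreserving.eigenvalue_ne_zero hgm hg hc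
  set ψ : X → ℂ := fun z => g (S z) / g z
  have hψm : AEStronglyMeasurable ψ μ :=
    ((hgm.comp_quasiMeasurePreserving hS).aemeasurable.div
      hgm.aemeasurable).aestronglyMeasurable
  have hψinv : ψ ∘ T =ᵐ[μ] ψ := by
    filter_upwards [hc, hS.ae hc] with z hTz hTSz
    simp only [ψ, comp_apply, hST z, hTz, hTSz, mul_div_mul_left _ _ hc0]
  obtain ⟨d, hd⟩ := hT.ae_eq_const_of_ae_eq_comp_ae hψm hψinv
  refine ⟨d, ?_⟩
  filter_upwards [hd, hT.ae_ne_zero_of_eigenfunction hgm hg hc] with z hψz hgz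
  exact (div_eq_iff hgz).1 hψz

end Eigenfunctions

section DiscreteSpectrum

variable {X : Type*} [MeasurableSpace X] {μ : Measure X} {T S : X → X}

def koopmanEigenfunctions (T : X → X) (μ : Measure X) : Set (Lp ℂ 2 μ) :=
  {g | g ≠ 0 ∧ ∃ c : ℂ, ∀ᵐ z ∂μ, (g : X → ℂ) (T z) = c * (g : X → ℂ) z}

theorem Ergodic.koopmanEigenfunctions_subset_of_commute (hT : Ergodic T μ)
    (hS : Measure.QuasiMeasurePreserving S μ μ) (hST : Function.Commute S T) :
    koopmanEigenfunctions T μ ⊆ koopmanEigenfunctions S μ := by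
  rintro g ⟨hg0, c, hc⟩
  have hg : ¬ (g : X → ℂ) =ᵐ[μ] 0 := fun h => hg0 (Lp.eq_zero_iff_ae_eq_zero.2 h)
  exact ⟨hg0, hT.eigenfunction_of_commute hS hST (Lp.aestronglyMeasurable g) hg hc⟩

theorem HasDiscreteSpectrum.of_koopmanEigenfunctions_subset (hT : HasDiscreteSpectrum T μ)
    (h : koopmanEigenfunctions T μ ⊆ koopmanEigenfunctions S μ) : HasDiscreteSpectrum S μ :=
  eq_top_iff.2 (hT.symm.le.trans (Submodule.topologicalClosure_mono (Submodule.span_mono h)))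

theorem HasDiscreteSpectrum.of_commute (hTds : HasDiscreteSpectrum T μ) (hT : Ergodic T μ)
    (hS : Measure.QuasiMeasurePreserving S μ μ) (hST : Function.Commute S T) :
    HasDiscreteSpectrum S μ :=
  hTds.of_koopmanEigenfunctions_subset (hT.koopmanEigenfunctions_subset_of_commute hS hST)

end DiscreteSpectrum

theorem discrete_spectrum_of_shift_implies_discrete_spectrum_of_CA_general
    {A : Type*} [MeasurableSpace A]
    (F : Config A → Config A)
    (hFshift : F ∘ shift = shift ∘ F)
    (μ : MeasureTheory.Measure (Config A))
    (hσerg : Ergodic shift μ) (hFmp : MeasureTheory.MeasurePreserving F μ μ)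
    (hσds : HasDiscreteSpectrum shift μ) :
    HasDiscreteSpectrum F μ :=
  hσds.of_commute hσerg hFmp.quasiMeasurePreserving (congrFun hFshift)

/-- **Pivato.** If `μ` is invariant under both `σ` and a cellular automaton
`F` and is `σ`-ergodic, and `(A^ℤ, σ, μ)` has discrete spectrum, then `(A^ℤ, F, μ)` has
discrete spectrum. -/
theorem discrete_spectrum_of_shift_implies_discrete_spectrum_of_CA
    {A : Type*} [Fintype A] [MeasurableSpace A]
    [TopologicalSpace A] [DiscreteTopology A]
    (F : Config A → Config A) (hFcont : Continuous F)
    (hFshift : F ∘ shift = shift ∘ F)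
    (μ : MeasureTheory.Measure (Config A)) [MeasureTheory.IsProbabilityMeasure μ]
    (hσerg : Ergodic shift μ) (hFmp : MeasureTheory.MeasurePreserving F μ μ)
    (hσds : HasDiscreteSpectrum shift μ) :
    HasDiscreteSpectrum F μ :=
  discrete_spectrum_of_shift_implies_discrete_spectrum_of_CA_general F hFshift μ hσerg hFmp hσds
end
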